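/- arXiv:1912.00549 — 3 statements merged into one kernel-verified Lean document; each statement's English description precedes it below -/
import Mathlib

section
/- Let T' = K·T with K > 1 and let J ∈ {1,...,K−1}. If C' ≥ K·(C−1) + (J−1)·(T − (C−1)) + 1, then for every schedule α satisfying SLA (C',T') and every multiple m of T', at least J of the K subintervals [m+jT, m+(j+1)T−1], j = 0,...,K−1, receive at least C allocation units (i.e., the number of missed T-intervals per window of K intervals is at most K−J). -/
def Sat (C T : ℕ) (α : ℕ → ℕ) : Prop :=
  ∀ Q : ℕ, C ≤ ∑ i ∈ Finset.range T, α (Q * T + i)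

/-!
Split the window of length `K * T` into its `K` subintervals of length `T`. A binary schedule gives
each subinterval at most `T` units, and a missed subinterval at most `C - 1`; so if `s` of them are
satisfied, the window receives at most `K * (C - 1) + s * (T - (C - 1))` units. Comparing with
`C' ≥ K * (C - 1) + (J - 1) * (T - (C - 1)) + 1` forces `s > J - 1`.
-/

open Finset

theorem Finset.sum_range_mul_eq_sum_sum {M : Type*} [AddCommMonoid M] (g : ℕ → M) (K T : ℕ) :
    ∑ i ∈ range (K * T), g i = ∑ j ∈ range K, ∑ i ∈ range T, g (j * T + i) := by
  induction K with
  | zero => simp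
  | succ k ih => rw [Nat.succ_mul, sum_range_add, ih, sum_range_succ]

theorem Finset.sum_le_card_mul_add_card_filter_mul {ι : Type*} (s : Finset ι) (f : ι → ℕ)
    {C T : ℕ} (hfT : ∀ j ∈ s, f j ≤ T) :
    ∑ j ∈ s, f j ≤ #s * (C - 1) + #(s.filter (C ≤ f ·)) * (T - (C - 1)) := by
  have hpoint : ∀ j ∈ s, f j ≤ (C - 1) + if C ≤ f j then T - (C - 1) else 0 := by
    intro j hj
    have := hfT j hj
    split_ifs <;> omega
  calc ∑ j ∈ s, f j ≤ ∑ j ∈ s, ((C - 1) + if C ≤ f j then T - (C - 1) else 0) :=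
        sum_le_sum hpoint
    _ = #s * (C - 1) + #(s.filter (C ≤ f ·)) * (T - (C - 1)) := by
        rw [sum_add_distrib, ← sum_filter, sum_const, sum_const, smul_eq_mul, smul_eq_mul]

theorem sum_range_le_of_le_one {α : ℕ → ℕ} (hbin : ∀ n, α n ≤ 1) (a T : ℕ) :
    ∑ i ∈ range T, α (a + i) ≤ T := by
  simpa using sum_le_card_nsmul (range T) (fun i => α (a + i)) 1 fun i _ => hbin (a + i)

theorem stmt_6_general (C T C' K J : ℕ) (α : ℕ → ℕ) (hbin : ∀ n, α n ≤ 1)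
    (hC' : K * (C - 1) + (J - 1) * (T - (C - 1)) + 1 ≤ C')
    (hsat : Sat C' (K * T) α) :
    ∀ Q : ℕ, J ≤ ((Finset.range K).filter
      (fun j => C ≤ ∑ i ∈ Finset.range T, α (Q * (K * T) + j * T + i))).card := by
  intro Q
  let f : ℕ → ℕ := fun j => ∑ i ∈ range T, α (Q * (K * T) + j * T + i)
  have hwindow : C' ≤ ∑ j ∈ range K, f j := by
    simpa only [f, sum_range_mul_eq_sum_sum, add_assoc] using hsat Q
  have hblock : ∀ j ∈ range K, f j ≤ T := fun j _ => sum_range_le_of_le_one hbin _ T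
  have hbound := (sum_le_card_mul_add_card_filter_mul (range K) f (C := C) hblock).trans'
    hwindow
  rw [card_range] at hbound
  show J ≤ #((range K).filter (C ≤ f ·))
  have hcount : J - 1 < #((range K).filter (C ≤ f ·)) :=
    Nat.lt_of_mul_lt_mul_right (a := T - (C - 1)) (by omega)
  omega

/-- with T' = K·T, 1 ≤ J ≤ K−1 and
C' ≥ K·(C−1) + (J−1)·(T−(C−1)) + 1, at least J of the K subintervals of each
aligned window of length K·T are satisfied (receive ≥ C units). -/
theorem stmt_6 (C T C' K J : ℕ) (α : ℕ → ℕ) (hbin : ∀ n, α n ≤ 1)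
    (hC1 : 1 ≤ C) (hCT : C ≤ T) (hK : 1 < K) (hJ1 : 1 ≤ J) (hJK : J ≤ K - 1)
    (hC' : K * (C - 1) + (J - 1) * (T - (C - 1)) + 1 ≤ C')
    (hsat : Sat C' (K * T) α) :
    ∀ Q : ℕ, J ≤ ((Finset.range K).filter
      (fun j => C ≤ ∑ i ∈ Finset.range T, α (Q * (K * T) + j * T + i))).card :=
  stmt_6_general C T C' K J α hbin hC' hsat
end

section
/- Every schedule satisfying SLA (C,T,D,W) also satisfies SLA (C,T,D',W') whenever D·W' ≤ D'·W and W' is a multiple of W (sufficient condition for subtyping with identical C and T). -/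
/-! A window of `W' = k * W` periods is the union of `k` consecutive windows of `W` periods, each
of which misses at most `D` deadlines; so it misses at most `k * D ≤ D'` of them. -/

def A (C T : ℕ) (α : ℕ → ℕ) (m : ℕ) : ℕ :=
  if C ≤ ∑ i ∈ Finset.range T, α (m + i) then 1 else 0

def SatW (C T D W : ℕ) (α : ℕ → ℕ) : Prop :=
  ∀ Q : ℕ, W - D ≤ ∑ j ∈ Finset.range W, A C T α (Q * (W * T) + j * T)

open Finset

theorem Finset.sum_range_mul_eq_sum_sum_range {M : Type*} [AddCommMonoid M] (f : ℕ → M)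
    (k W : ℕ) : ∑ j ∈ range (k * W), f j = ∑ b ∈ range k, ∑ r ∈ range W, f (b * W + r) := by
  induction k with
  | zero => simp
  | succ k ih => rw [Nat.succ_mul, sum_range_add, ih, sum_range_succ]

theorem Nat.mul_sub_le_sub_mul_of_mul_le {D D' W k : ℕ} (h : D * (W * k) ≤ D' * W) :
    W * k - D' ≤ (W - D) * k := by
  rcases W.eq_zero_or_pos with rfl | hW
  · simp
  have hDk : D * k ≤ D' :=
    Nat.le_of_mul_le_mul_right (by simpa only [mul_assoc, mul_comm k W] using h) hW
  rw [Nat.sub_mul]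
  omega

theorem SatW.sub_mul_le_sum_range_mul {C T D W : ℕ} {α : ℕ → ℕ} (h : SatW C T D W α)
    (Q k : ℕ) : (W - D) * k ≤ ∑ j ∈ range (W * k), A C T α (Q * (W * k * T) + j * T) := by
  calc (W - D) * k = ∑ _b ∈ range k, (W - D) := by simp [mul_comm]
    _ ≤ ∑ b ∈ range k, ∑ r ∈ range W, A C T α (Q * (W * k * T) + (b * W + r) * T) :=
        sum_le_sum fun b _ => (h (Q * k + b)).trans_eq <| sum_congr rfl fun r _ => by
          congr 1; ring
    _ = _ := by rw [mul_comm W k, sum_range_mul_eq_sum_sum_range, mul_comm k W]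

theorem stmt_11_general (C T D W D' W' : ℕ)
    (hdvd : W ∣ W') (hratio : D * W' ≤ D' * W) :
    ∀ α : ℕ → ℕ, (∀ n, α n ≤ 1) → SatW C T D W α → SatW C T D' W' α := by
  obtain ⟨k, rfl⟩ := hdvd
  intro α _ hsat Q
  exact (Nat.mul_sub_le_sub_mul_of_mul_le hratio).trans (hsat.sub_mul_le_sum_range_mul Q k)

/-- if W ∣ W' and D·W' ≤ D'·W then every schedule satisfying
(C,T,D,W) satisfies (C,T,D',W'). -/
theorem stmt_11 (C T D W D' W' : ℕ)
    (hC1 : 1 ≤ C) (hCT : C ≤ T) (hDW : D ≤ W) (hD'W' : D' ≤ W')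
    (hW : 1 ≤ W) (hdvd : W ∣ W') (hratio : D * W' ≤ D' * W) :
    ∀ α : ℕ → ℕ, (∀ n, α n ≤ 1) → SatW C T D W α → SatW C T D' W' α :=
  stmt_11_general C T D W D' W' hdvd hratio
end

section
/- If T ≤ T'/2 with K = ⌊T'/T⌋, and a schedule α satisfies (C,T), then for every start s ∈ ℕ (not necessarily a multiple of T'), the sum of α over [s, s+T'−1] is at least (K−1)·C. -/
namespace Sat

variable {C T : ℕ} {α : ℕ → ℕ}

theorem mul_le_sum_Ico (h : Sat C T α) (q m : ℕ) :
    m * C ≤ ∑ n ∈ Finset.Ico (q * T) ((q + m) * T), α n := by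
  induction m with
  | zero => simp
  | succ m ih =>
    have hblock : C ≤ ∑ n ∈ Finset.Ico ((q + m) * T) ((q + (m + 1)) * T), α n := by
      rw [Finset.sum_Ico_eq_sum_range, ← add_assoc, add_one_mul, Nat.add_sub_cancel_left]
      exact h (q + m)
    rw [← Finset.sum_Ico_consecutive α (n := (q + m) * T) (by gcongr; omega) (by gcongr; omega),
      add_one_mul]
    exact add_le_add ih hblock

theorem mul_le_sum_window (h : Sat C T α) (s L : ℕ) :
    (L / T - 1) * C ≤ ∑ i ∈ Finset.range L, α (s + i) := by
  rcases Nat.eq_zero_or_pos T with rfl | hT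
  · simp
  rcases (L / T).eq_zero_or_pos with hL | hL
  · simp [hL]
  obtain ⟨k, hk⟩ := Nat.exists_eq_add_one_of_ne_zero hL.ne'
  -- the window [s, s + L) contains the aligned blocks s / T + 1, …, s / T + k
  have hstart : s ≤ (s / T + 1) * T := (add_one_mul (s / T) T).symm ▸ (Nat.lt_div_mul_add hT).le
  have hend : (s / T + 1 + k) * T ≤ s + L :=
    calc (s / T + 1 + k) * T = s / T * T + L / T * T := by rw [hk]; ring
      _ ≤ s + L := add_le_add (Nat.div_mul_le_self s T) (Nat.div_mul_le_self L T)
  calc (L / T - 1) * C = k * C := by rw [hk, Nat.add_sub_cancel]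
    _ ≤ ∑ n ∈ Finset.Ico ((s / T + 1) * T) ((s / T + 1 + k) * T), α n := h.mul_le_sum_Ico _ k
    _ ≤ ∑ n ∈ Finset.Ico s (s + L), α n :=
      Finset.sum_le_sum_of_subset (Finset.Ico_subset_Ico hstart hend)
    _ = ∑ i ∈ Finset.range L, α (s + i) := by
      rw [Finset.sum_Ico_eq_sum_range, Nat.add_sub_cancel_left]

end Sat

theorem stmt_18_general (C T T' K : ℕ) (α : ℕ → ℕ)
    (hK : K = T' / T) (hsat : Sat C T α) :
    ∀ s : ℕ, (K - 1) * C ≤ ∑ i ∈ Finset.range T', α (s + i) := by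
  subst hK
  exact fun s => hsat.mul_le_sum_window s T'

/-- if 2T ≤ T' and K = ⌊T'/T⌋, a schedule satisfying (C,T) provides
at least (K−1)·C units in every interval [s, s+T'), for arbitrary start s. -/
theorem stmt_18 (C T T' K : ℕ) (α : ℕ → ℕ) (hbin : ∀ n, α n ≤ 1)
    (hC1 : 1 ≤ C) (hCT : C ≤ T) (hT : 1 ≤ T) (hhalf : 2 * T ≤ T')
    (hK : K = T' / T) (hsat : Sat C T α) :
    ∀ s : ℕ, (K - 1) * C ≤ ∑ i ∈ Finset.range T', α (s + i) :=
  stmt_18_general C T T' K α hK hsat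
end
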